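/- Let e_α := (−sin α, cos α), J(x,y) = (−y,x), let p : ℝ → ℝ be a C³ function with p(α + π) = p(α) for all α, and define γ(α) := p'(α)e_α − p(α)Je_α, q(α) := (p''(α) + p(α))², A := (1/2)∫₀^{2π} p(α)(p''(α)+p(α)) dα, and F(α₁,α₂) := [ω(γ''(α₁),γ(α₂)) + 2ω(γ'(α₁),γ'(α₂)) + ω(γ(α₁),γ''(α₂))] · ω(γ'(α₁),γ'(α₂)). Then 4∬_{[0,π]²} F(α₁,α₂) dα₁dα₂ = −2A∫₀^{2π} q(α) dα + (∫₀^{2π} q(α) dα)² − (∫₀^{2π} q(α)cos(2α) dα)² − (∫₀^{2π} q(α)sin(2α) dα)². -/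

import Mathlib

/-!
Write `e = eVec`, `J = Jrot` and `ρ = p'' + p`. Then `γ' = ρ e`, `γ'' = ρ' e + ρ J e`, and `γ` is
antiperiodic: `γ (α + π) = -γ α`. In coordinates, the double integral over `[0, π]²` of a product
`ω(u x, v y) ω(w x, z y)` splits into products of single integrals `∫ uᵢ wⱼ`. For a curve `c` and
its derivative these are computed by integration by parts, the boundary terms cancelling by
antiperiodicity: the diagonal ones vanish and the off-diagonal ones are `± ½ ∫ ω(c, c')`. So the two
outer terms of `F` each contribute `-½ (∫ ω(γ, γ')) (∫ ω(γ', γ'')) = -½ (∫ p ρ) (∫ ρ²)`, while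
`ω(γ' x, γ' y)² = ρ(x)² ρ(y)² sin²(y - x)` separates through
`2 sin²(y - x) = 1 - cos 2x cos 2y - sin 2x sin 2y`. Integrals of `π`-periodic functions over
`[0, 2π]` are twice those over `[0, π]`.
-/

open Real

/-- The standard area form (determinant) on `ℝ²`. -/
def omega2 (u v : ℝ × ℝ) : ℝ := u.1 * v.2 - u.2 * v.1

/-- The unit vector forming an angle `α` with the vertical direction `(0,1)`. -/
noncomputable def eVec (α : ℝ) : ℝ × ℝ := (-Real.sin α, Real.cos α)

/-- Rotation by `π/2` in the positive direction. -/
def Jrot (v : ℝ × ℝ) : ℝ × ℝ := (-v.2, v.1)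

open Function intervalIntegral
open MeasureTheory (volume)

@[fun_prop]
lemma Continuous.omega2 {X : Type*} [TopologicalSpace X] {u v : X → ℝ × ℝ} (hu : Continuous u)
    (hv : Continuous v) : Continuous fun x => omega2 (u x) (v x) := by
  unfold _root_.omega2; fun_prop

section DoubleIntegral

variable {a b c d : ℝ}

lemma integral_integral_add {f g : ℝ → ℝ → ℝ} (hf : Continuous (uncurry f))
    (hg : Continuous (uncurry g)) :
    ∫ x in a..b, ∫ y in c..d, (f x y + g x y) =
      (∫ x in a..b, ∫ y in c..d, f x y) + ∫ x in a..b, ∫ y in c..d, g x y := by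
  have hint {h : ℝ → ℝ → ℝ} (hh : Continuous (uncurry h)) :
      IntervalIntegrable (fun x => ∫ y in c..d, h x y) volume a b :=
    (continuous_parametric_intervalIntegral_of_continuous' hh c d).intervalIntegrable a b
  rw [integral_congr fun x _ => integral_add ((hf.uncurry_left x).intervalIntegrable c d)
    ((hg.uncurry_left x).intervalIntegrable c d)]
  exact integral_add (hint hf) (hint hg)

lemma integral_integral_sum_mul {ι : Type*} (s : Finset ι) {f g : ι → ℝ → ℝ}
    (hf : ∀ i ∈ s, IntervalIntegrable (f i) volume a b)
    (hg : ∀ i ∈ s, IntervalIntegrable (g i) volume c d) :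
    ∫ x in a..b, ∫ y in c..d, ∑ i ∈ s, f i x * g i y =
      ∑ i ∈ s, (∫ x in a..b, f i x) * ∫ y in c..d, g i y := by
  rw [integral_congr fun x _ => integral_finsetSum fun i hi => (hg i hi).const_mul (f i x)]
  simp_rw [intervalIntegral.integral_const_mul]
  rw [integral_finsetSum fun i hi => (hf i hi).mul_const _]
  simp_rw [intervalIntegral.integral_mul_const]

lemma integral_integral_omega2_mul_omega2 {u v w z : ℝ → ℝ × ℝ} (hu : Continuous u)
    (hv : Continuous v) (hw : Continuous w) (hz : Continuous z) :
    ∫ x in a..b, ∫ y in c..d, omega2 (u x) (v y) * omega2 (w x) (z y) =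
      (∫ x in a..b, (u x).1 * (w x).1) * (∫ y in c..d, (v y).2 * (z y).2)
      - (∫ x in a..b, (u x).1 * (w x).2) * (∫ y in c..d, (v y).2 * (z y).1)
      - (∫ x in a..b, (u x).2 * (w x).1) * (∫ y in c..d, (v y).1 * (z y).2)
      + (∫ x in a..b, (u x).2 * (w x).2) * (∫ y in c..d, (v y).1 * (z y).1) := by
  let f : Fin 4 → ℝ → ℝ := ![fun x => (u x).1 * (w x).1, fun x => -((u x).1 * (w x).2),
    fun x => -((u x).2 * (w x).1), fun x => (u x).2 * (w x).2]
  let g : Fin 4 → ℝ → ℝ := ![fun y => (v y).2 * (z y).2, fun y => (v y).2 * (z y).1,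
    fun y => (v y).1 * (z y).2, fun y => (v y).1 * (z y).1]
  have hfg : ∀ x y, omega2 (u x) (v y) * omega2 (w x) (z y) = ∑ i, f i x * g i y := by
    intro x y
    simp only [Fin.sum_univ_four, f, g, omega2, Matrix.cons_val]
    ring
  simp_rw [hfg]
  rw [integral_integral_sum_mul _ (fun i _ => ?_) (fun i _ => ?_)]
  · simp only [Fin.sum_univ_four, f, g, Matrix.cons_val, intervalIntegral.integral_neg]
    ring
  · fin_cases i <;> exact Continuous.intervalIntegrable (by simp [f]; fun_prop) _ _
  · fin_cases i <;> exact Continuous.intervalIntegrable (by simp [g]; fun_prop) _ _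

lemma integral_integral_omega2_mul_omega2_comm {u v w z : ℝ → ℝ × ℝ} (hu : Continuous u)
    (hv : Continuous v) (hw : Continuous w) (hz : Continuous z) :
    ∫ x in a..b, ∫ y in a..b, omega2 (u x) (v y) * omega2 (w x) (z y) =
      ∫ x in a..b, ∫ y in a..b, omega2 (v x) (u y) * omega2 (z x) (w y) := by
  rw [integral_integral_omega2_mul_omega2 hu hv hw hz,
    integral_integral_omega2_mul_omega2 hv hu hz hw]
  ring

end DoubleIntegral

section Derivatives

variable {𝕜 : Type*} [NontriviallyNormedField 𝕜]

lemma Function.Periodic.deriv {F : Type*} [NormedAddCommGroup F] [NormedSpace 𝕜 F] {f : 𝕜 → F}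
    {T : 𝕜} (hf : Periodic f T) : Periodic (deriv f) T :=
  fun x => by rw [← deriv_comp_add_const, hf.funext]

lemma Function.Antiperiodic.of_hasDerivAt {F : Type*} [NormedAddCommGroup F] [NormedSpace 𝕜 F]
    {f f' : 𝕜 → F} {T : 𝕜} (hf : Antiperiodic f T) (hd : ∀ x, HasDerivAt f (f' x) x) :
    Antiperiodic f' T := by
  intro x
  have hshift : HasDerivAt (fun y => f (y + T)) (f' (x + T)) x := (hd (x + T)).comp_add_const x T
  rw [hf.funext] at hshift
  exact hshift.unique (hd x).neg

variable {E F : Type*} [NormedAddCommGroup E] [NormedSpace 𝕜 E] [NormedAddCommGroup F]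
  [NormedSpace 𝕜 F] {f : 𝕜 → E × F} {f' : E × F} {x : 𝕜}

lemma HasDerivAt.fst (h : HasDerivAt f f' x) : HasDerivAt (fun t => (f t).1) f'.1 x :=
  (ContinuousLinearMap.fst 𝕜 E F).hasFDerivAt.comp_hasDerivAt x h

lemma HasDerivAt.snd (h : HasDerivAt f f' x) : HasDerivAt (fun t => (f t).2) f'.2 x :=
  (ContinuousLinearMap.snd 𝕜 E F).hasFDerivAt.comp_hasDerivAt x h

end Derivatives

section Antiperiodic

lemma Function.Antiperiodic.fst {α β γ : Type*} [Add α] [Neg β] [Neg γ] {f : α → β × γ} {T : α}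
    (hf : Antiperiodic f T) : Antiperiodic (fun t => (f t).1) T :=
  fun x => by simp [hf x]

lemma Function.Antiperiodic.snd {α β γ : Type*} [Add α] [Neg β] [Neg γ] {f : α → β × γ} {T : α}
    (hf : Antiperiodic f T) : Antiperiodic (fun t => (f t).2) T :=
  fun x => by simp [hf x]

variable {T : ℝ}

lemma Function.Antiperiodic.integral_mul_deriv {f g f' g' : ℝ → ℝ}
    (hf : Antiperiodic f T) (hg : Antiperiodic g T) (hfd : ∀ x, HasDerivAt f (f' x) x)
    (hgd : ∀ x, HasDerivAt g (g' x) x) (hf' : IntervalIntegrable f' volume 0 T)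
    (hg' : IntervalIntegrable g' volume 0 T) :
    ∫ x in 0..T, f x * g' x = -∫ x in 0..T, f' x * g x := by
  have hfg : f T * g T = f 0 * g 0 := by simpa using (hf.mul hg) 0
  rw [integral_mul_deriv_eq_deriv_mul (fun x _ => hfd x) (fun x _ => hgd x) hf' hg', hfg,
    sub_self, zero_sub]

lemma Function.Antiperiodic.integral_deriv_mul_self {f f' : ℝ → ℝ}
    (hf : Antiperiodic f T) (hfd : ∀ x, HasDerivAt f (f' x) x)
    (hf' : IntervalIntegrable f' volume 0 T) :
    ∫ x in 0..T, f' x * f x = 0 := by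
  have h := hf.integral_mul_deriv hf hfd hfd hf' hf'
  simp_rw [mul_comm (f _)] at h
  linarith

variable {c c' : ℝ → ℝ × ℝ}

lemma Function.Antiperiodic.integral_fst_mul_deriv_snd (hc : Antiperiodic c T)
    (hd : ∀ x, HasDerivAt c (c' x) x) (hc' : Continuous c') :
    ∫ x in 0..T, (c x).1 * (c' x).2 = (∫ x in 0..T, omega2 (c x) (c' x)) / 2 := by
  have hcont : Continuous c := continuous_iff_continuousAt.2 fun x => (hd x).continuousAt
  have hibp := hc.snd.integral_mul_deriv hc.fst (fun x => (hd x).snd) (fun x => (hd x).fst)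
    (hc'.snd.intervalIntegrable _ _) (hc'.fst.intervalIntegrable _ _)
  simp_rw [mul_comm (c' _).2] at hibp
  unfold omega2
  rw [integral_sub ((by fun_prop : Continuous fun x => (c x).1 * (c' x).2).intervalIntegrable _ _)
    ((by fun_prop : Continuous fun x => (c x).2 * (c' x).1).intervalIntegrable _ _), hibp]
  ring

lemma Function.Antiperiodic.integral_snd_mul_deriv_fst (hc : Antiperiodic c T)
    (hd : ∀ x, HasDerivAt c (c' x) x) (hc' : Continuous c') :
    ∫ x in 0..T, (c x).2 * (c' x).1 = -(∫ x in 0..T, omega2 (c x) (c' x)) / 2 := by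
  have hcont : Continuous c := continuous_iff_continuousAt.2 fun x => (hd x).continuousAt
  have h := hc.integral_fst_mul_deriv_snd hd hc'
  unfold omega2 at h ⊢
  rw [integral_sub ((by fun_prop : Continuous fun x => (c x).1 * (c' x).2).intervalIntegrable _ _)
    ((by fun_prop : Continuous fun x => (c x).2 * (c' x).1).intervalIntegrable _ _)] at h ⊢
  linarith

lemma Function.Antiperiodic.integral_integral_omega2_deriv_mul_omega2 {k k' : ℝ → ℝ × ℝ}
    (hc : Antiperiodic c T) (hk : Antiperiodic k T) (hcd : ∀ x, HasDerivAt c (c' x) x)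
    (hkd : ∀ x, HasDerivAt k (k' x) x) (hc' : Continuous c') (hk' : Continuous k') :
    ∫ x in 0..T, ∫ y in 0..T, omega2 (c' x) (k y) * omega2 (c x) (k' y) =
      -(∫ x in 0..T, omega2 (c x) (c' x)) * (∫ x in 0..T, omega2 (k x) (k' x)) / 2 := by
  have hcont : Continuous c := continuous_iff_continuousAt.2 fun x => (hcd x).continuousAt
  have hkont : Continuous k := continuous_iff_continuousAt.2 fun x => (hkd x).continuousAt
  have hc11 := hc.fst.integral_deriv_mul_self (fun x => (hcd x).fst)
    (hc'.fst.intervalIntegrable _ _)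
  have hc22 := hc.snd.integral_deriv_mul_self (fun x => (hcd x).snd)
    (hc'.snd.intervalIntegrable _ _)
  have hc12 := hc.fst.integral_mul_deriv hc.snd (fun x => (hcd x).fst) (fun x => (hcd x).snd)
    (hc'.fst.intervalIntegrable _ _) (hc'.snd.intervalIntegrable _ _)
  have hc21 := hc.snd.integral_mul_deriv hc.fst (fun x => (hcd x).snd) (fun x => (hcd x).fst)
    (hc'.snd.intervalIntegrable _ _) (hc'.fst.intervalIntegrable _ _)
  rw [hc.integral_fst_mul_deriv_snd hcd hc'] at hc12
  rw [hc.integral_snd_mul_deriv_fst hcd hc'] at hc21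
  rw [integral_integral_omega2_mul_omega2 hc' hkont hcont hk', hc11, hc22,
    hk.integral_fst_mul_deriv_snd hkd hk', hk.integral_snd_mul_deriv_fst hkd hk']
  linear_combination ((∫ x in 0..T, omega2 (k x) (k' x)) / 2) * (hc12 - hc21)

lemma Function.Antiperiodic.integral_integral_bialy {c'' : ℝ → ℝ × ℝ}
    (hc : Antiperiodic c T) (hd : ∀ x, HasDerivAt c (c' x) x) (hd' : ∀ x, HasDerivAt c' (c'' x) x)
    (hc'' : Continuous c'') :
    ∫ x in 0..T, ∫ y in 0..T, (omega2 (c'' x) (c y) + 2 * omega2 (c' x) (c' y)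
        + omega2 (c x) (c'' y)) * omega2 (c' x) (c' y) =
      -(∫ x in 0..T, omega2 (c x) (c' x)) * (∫ x in 0..T, omega2 (c' x) (c'' x))
        + 2 * ∫ x in 0..T, ∫ y in 0..T, omega2 (c' x) (c' y) ^ 2 := by
  have hcont : Continuous c := continuous_iff_continuousAt.2 fun x => (hd x).continuousAt
  have hcont' : Continuous c' := continuous_iff_continuousAt.2 fun x => (hd' x).continuousAt
  have hc' := hc.of_hasDerivAt hd
  have hsplit : ∀ x y, (omega2 (c'' x) (c y) + 2 * omega2 (c' x) (c' y)
        + omega2 (c x) (c'' y)) * omega2 (c' x) (c' y) =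
      (omega2 (c'' x) (c y) * omega2 (c' x) (c' y) + 2 * omega2 (c' x) (c' y) ^ 2)
        + omega2 (c x) (c'' y) * omega2 (c' x) (c' y) := fun x y => by ring
  simp_rw [hsplit]
  rw [integral_integral_add (by fun_prop) (by fun_prop),
    integral_integral_add (by fun_prop) (by fun_prop),
    integral_integral_omega2_mul_omega2_comm hcont hc'' hcont' hcont',
    hc'.integral_integral_omega2_deriv_mul_omega2 hc hd' hd hc'' hcont']
  simp only [intervalIntegral.integral_const_mul]
  ring

end Antiperiodic

lemma Function.Periodic.intervalIntegral_zero_two_mul {f : ℝ → ℝ} {T : ℝ} (hf : Periodic f T)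
    (hi : ∀ t₁ t₂, IntervalIntegrable f volume t₁ t₂) :
    ∫ x in 0..2 * T, f x = 2 * ∫ x in 0..T, f x := by
  rw [two_mul, hf.intervalIntegral_add_eq_add 0 T hi, zero_add, two_mul]

section UnitVector

@[fun_prop]
lemma continuous_eVec : Continuous eVec := by
  unfold eVec; fun_prop

@[fun_prop]
lemma continuous_Jrot : Continuous Jrot := by
  unfold Jrot; fun_prop

lemma antiperiodic_eVec : Antiperiodic eVec π := fun α => by
  simp [eVec, sin_add_pi, cos_add_pi]

lemma hasDerivAt_eVec (α : ℝ) : HasDerivAt eVec (Jrot (eVec α)) α :=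
  ((hasDerivAt_sin α).neg.prodMk (hasDerivAt_cos α)).congr_deriv (by simp [eVec, Jrot])

lemma hasDerivAt_Jrot_eVec (α : ℝ) : HasDerivAt (fun t => Jrot (eVec t)) (-eVec α) α :=
  ((hasDerivAt_cos α).neg.prodMk (hasDerivAt_sin α).neg).congr_deriv (by simp [eVec])

lemma HasDerivAt.smul_eVec {r : ℝ → ℝ} {r' α : ℝ} (hr : HasDerivAt r r' α) :
    HasDerivAt (fun t => r t • eVec t) (r' • eVec α + r α • Jrot (eVec α)) α :=
  (hr.smul (hasDerivAt_eVec α)).congr_deriv (add_comm _ _)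

lemma omega2_smul_eVec_smul_eVec (a b x y : ℝ) :
    omega2 (a • eVec x) (b • eVec y) = a * b * sin (y - x) := by
  simp only [omega2, eVec, Prod.smul_mk, smul_eq_mul, sin_sub]
  ring

lemma omega2_smul_eVec_deriv (r r' α : ℝ) :
    omega2 (r • eVec α) (r' • eVec α + r • Jrot (eVec α)) = r ^ 2 := by
  simp only [omega2, eVec, Jrot, Prod.smul_mk, Prod.fst_add, Prod.snd_add, smul_eq_mul]
  linear_combination r ^ 2 * sin_sq_add_cos_sq α

lemma integral_integral_omega2_smul_eVec_sq {r : ℝ → ℝ} (hr : Continuous r) (a b : ℝ) :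
    ∫ x in a..b, ∫ y in a..b, omega2 (r x • eVec x) (r y • eVec y) ^ 2 =
      ((∫ x in a..b, r x ^ 2) ^ 2 - (∫ x in a..b, r x ^ 2 * cos (2 * x)) ^ 2
        - (∫ x in a..b, r x ^ 2 * sin (2 * x)) ^ 2) / 2 := by
  let f : Fin 3 → ℝ → ℝ := ![fun x => r x ^ 2 / 2, fun x => -(r x ^ 2 * cos (2 * x)) / 2,
    fun x => -(r x ^ 2 * sin (2 * x)) / 2]
  let g : Fin 3 → ℝ → ℝ := ![fun y => r y ^ 2, fun y => r y ^ 2 * cos (2 * y),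
    fun y => r y ^ 2 * sin (2 * y)]
  have hfg : ∀ x y, omega2 (r x • eVec x) (r y • eVec y) ^ 2 = ∑ i, f i x * g i y := by
    intro x y
    have h2 : 2 * (y - x) = 2 * y - 2 * x := by ring
    rw [omega2_smul_eVec_smul_eVec, mul_pow, sin_sq_eq_half_sub, h2, cos_sub]
    simp only [Fin.sum_univ_three, f, g, Matrix.cons_val]
    ring
  simp_rw [hfg]
  rw [integral_integral_sum_mul _ (fun i _ => ?_) (fun i _ => ?_)]
  · simp only [Fin.sum_univ_three, f, g, Matrix.cons_val, intervalIntegral.integral_div,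
      intervalIntegral.integral_neg]
    ring
  · fin_cases i <;> exact Continuous.intervalIntegrable (by simp [f]; fun_prop) _ _
  · fin_cases i <;> exact Continuous.intervalIntegrable (by simp [g]; fun_prop) _ _

end UnitVector

section SupportFunction

noncomputable def supportCurve (p : ℝ → ℝ) (α : ℝ) : ℝ × ℝ :=
  deriv p α • eVec α - p α • Jrot (eVec α)

noncomputable def curvatureRadius (p : ℝ → ℝ) (α : ℝ) : ℝ := deriv (deriv p) α + p α

variable {p : ℝ → ℝ}

lemma hasDerivAt_supportCurve {α : ℝ} (h0 : DifferentiableAt ℝ p α)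
    (h1 : DifferentiableAt ℝ (deriv p) α) :
    HasDerivAt (supportCurve p) (curvatureRadius p α • eVec α) α := by
  refine (h1.hasDerivAt.smul_eVec.sub (h0.hasDerivAt.smul (hasDerivAt_Jrot_eVec α))).congr_deriv ?_
  simp only [curvatureRadius, add_smul, smul_neg]
  abel

lemma omega2_supportCurve (r α : ℝ) : omega2 (supportCurve p α) (r • eVec α) = p α * r := by
  simp only [supportCurve, omega2, eVec, Jrot, Prod.smul_mk, Prod.fst_sub, Prod.snd_sub,
    smul_eq_mul]
  linear_combination p α * r * sin_sq_add_cos_sq α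

lemma Function.Periodic.antiperiodic_supportCurve (hp : Periodic p π) :
    Antiperiodic (supportCurve p) π := fun α => by
  have hJ : Jrot (-eVec α) = -Jrot (eVec α) := by simp [Jrot]
  simp only [supportCurve, hp α, hp.deriv α, antiperiodic_eVec α, hJ, smul_neg]
  abel

lemma Function.Periodic.curvatureRadius (hp : Periodic p π) : Periodic (curvatureRadius p) π :=
  fun α => by simp only [_root_.curvatureRadius, hp α, hp.deriv.deriv α]

lemma ContDiff.continuous_curvatureRadius (hp : ContDiff ℝ 2 p) :
    Continuous (curvatureRadius p) := by
  have hp1 : ContDiff ℝ 1 (deriv p) := hp.deriv'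
  have := hp1.continuous_deriv le_rfl
  unfold _root_.curvatureRadius
  fun_prop

lemma integral_integral_bialy_supportCurve (hp : ContDiff ℝ 3 p) (hper : Periodic p π) :
    ∫ x in 0..π, ∫ y in 0..π, (omega2 (deriv (deriv (supportCurve p)) x) (supportCurve p y)
        + 2 * omega2 (deriv (supportCurve p) x) (deriv (supportCurve p) y)
        + omega2 (supportCurve p x) (deriv (deriv (supportCurve p)) y))
          * omega2 (deriv (supportCurve p) x) (deriv (supportCurve p) y) =
      -(∫ x in 0..π, p x * curvatureRadius p x) * (∫ x in 0..π, curvatureRadius p x ^ 2)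
        + (∫ x in 0..π, curvatureRadius p x ^ 2) ^ 2
        - (∫ x in 0..π, curvatureRadius p x ^ 2 * cos (2 * x)) ^ 2
        - (∫ x in 0..π, curvatureRadius p x ^ 2 * sin (2 * x)) ^ 2 := by
  have hp1 : ContDiff ℝ 2 (deriv p) := hp.deriv'
  have hp2 : ContDiff ℝ 1 (deriv (deriv p)) := hp1.deriv'
  have hγ (α : ℝ) : HasDerivAt (supportCurve p) (curvatureRadius p α • eVec α) α :=
    hasDerivAt_supportCurve (hp.differentiable (by norm_num) α)
      (hp1.differentiable (by norm_num) α)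
  have hρ (α : ℝ) :
      HasDerivAt (curvatureRadius p) (deriv (deriv (deriv p)) α + deriv p α) α :=
    (hp2.differentiable one_ne_zero α).hasDerivAt.add
      (hp.differentiable (by norm_num) α).hasDerivAt
  have hγ' (α : ℝ) := (hρ α).smul_eVec
  have hρc := (hp.of_le (by norm_num)).continuous_curvatureRadius
  have hcont'' : Continuous fun α => (deriv (deriv (deriv p)) α + deriv p α) • eVec α
      + curvatureRadius p α • Jrot (eVec α) := by
    fun_prop
  simp only [funext fun α => (hγ α).deriv, funext fun α => (hγ' α).deriv,
    hper.antiperiodic_supportCurve.integral_integral_bialy hγ hγ' hcont'', omega2_supportCurve,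
    omega2_smul_eVec_deriv, integral_integral_omega2_smul_eVec_sq hρc]
  ring

end SupportFunction

theorem stmt_12 (p : ℝ → ℝ) (hp : ContDiff ℝ 3 p)
    (hper : ∀ α : ℝ, p (α + π) = p α)
    (γ : ℝ → ℝ × ℝ)
    (hγ : ∀ α : ℝ, γ α = deriv p α • eVec α - p α • Jrot (eVec α))
    (q : ℝ → ℝ) (hq : ∀ α : ℝ, q α = (deriv (deriv p) α + p α) ^ 2)
    (A : ℝ)
    (hA : A = (1 / 2) * ∫ α in (0:ℝ)..(2 * π), p α * (deriv (deriv p) α + p α))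
    (F : ℝ → ℝ → ℝ)
    (hF : ∀ α₁ α₂ : ℝ, F α₁ α₂ =
      (omega2 (deriv (deriv γ) α₁) (γ α₂) + 2 * omega2 (deriv γ α₁) (deriv γ α₂)
        + omega2 (γ α₁) (deriv (deriv γ) α₂)) * omega2 (deriv γ α₁) (deriv γ α₂)) :
    4 * (∫ α₁ in (0:ℝ)..π, ∫ α₂ in (0:ℝ)..π, F α₁ α₂) =
      -2 * A * (∫ α in (0:ℝ)..(2 * π), q α) +
      (∫ α in (0:ℝ)..(2 * π), q α) ^ 2 -
      (∫ α in (0:ℝ)..(2 * π), q α * Real.cos (2 * α)) ^ 2 -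
      (∫ α in (0:ℝ)..(2 * π), q α * Real.sin (2 * α)) ^ 2 := by
  obtain rfl : γ = supportCurve p := funext hγ
  set ρ := curvatureRadius p
  have hρ : Periodic ρ π := Periodic.curvatureRadius hper
  have hρc : Continuous ρ := (hp.of_le (by norm_num)).continuous_curvatureRadius
  have hcos (x : ℝ) : cos (2 * (x + π)) = cos (2 * x) := by rw [mul_add, cos_add_two_pi]
  have hsin (x : ℝ) : sin (2 * (x + π)) = sin (2 * x) := by rw [mul_add, sin_add_two_pi]
  have h2π (f : ℝ → ℝ) (hf : Periodic f π) (hc : Continuous f) :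
      ∫ x in 0..2 * π, f x = 2 * ∫ x in 0..π, f x :=
    hf.intervalIntegral_zero_two_mul fun _ _ => hc.intervalIntegrable _ _
  simp only [hF, hq, hA, ← curvatureRadius.eq_1, integral_integral_bialy_supportCurve hp hper]
  rw [h2π (fun x => p x * ρ x) (fun x => by simp only [hper x, hρ x]) (by fun_prop),
    h2π (fun x => ρ x ^ 2) (fun x => by simp only [hρ x]) (by fun_prop),
    h2π (fun x => ρ x ^ 2 * cos (2 * x)) (fun x => by simp only [hρ x, hcos x]) (by fun_prop),
    h2π (fun x => ρ x ^ 2 * sin (2 * x)) (fun x => by simp only [hρ x, hsin x]) (by fun_prop)]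
  ring
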